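/- Let D ⊆ ℝ^d, θ ∈ ℝ^d, Γ ∈ ℝ^{m×d}, τ ∈ ℝ^m. If there exists a finitely supported probability measure π on D with E_{x∼π}[Γx] ≤ τ achieving the supremum of E_{x∼π}[θᵀx] over all such measures, then there exists an optimal finitely supported feasible probability measure π* whose support has at most m+1 points. -/

import Mathlib

/-!
Keeping the mean `∑ w x • Γx` fixed, the reweightings of a support `t` are cut out by only
`m + 1` linear equations (mass and mean). If `#t > m + 1` the vectors `(1, Γx)`, `x ∈ t`, are
therefore linearly dependent; moving the weights along such a dependence, in the direction where
the reward does not decrease, until a first weight vanishes keeps the policy feasible and at least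
as good while shrinking its support. Iterating reaches a support of at most `m + 1` points.
-/

open Matrix Finset Module

variable {α 𝕜 V : Type*}

section Reweighting

variable [Semiring 𝕜] [Preorder 𝕜] [AddCommMonoid V] [Module 𝕜 V] (f : α → V) (r : α → 𝕜)

structure IsImprovingReweighting (t : Finset α) (w : α → 𝕜) (t' : Finset α) (w' : α → 𝕜) :
    Prop where
  nonneg : ∀ x ∈ t', 0 ≤ w' x
  sum_eq : ∑ x ∈ t', w' x = ∑ x ∈ t, w x
  sum_smul_eq : ∑ x ∈ t', w' x • f x = ∑ x ∈ t, w x • f x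
  sum_smul_le : ∑ x ∈ t, w x • r x ≤ ∑ x ∈ t', w' x • r x

namespace IsImprovingReweighting

variable {f r}

lemma refl {t : Finset α} {w : α → 𝕜} (hw : ∀ x ∈ t, 0 ≤ w x) :
    IsImprovingReweighting f r t w t w :=
  ⟨hw, rfl, rfl, le_rfl⟩

lemma trans {t₁ t₂ t₃ : Finset α} {w₁ w₂ w₃ : α → 𝕜}
    (h₁₂ : IsImprovingReweighting f r t₁ w₁ t₂ w₂)
    (h₂₃ : IsImprovingReweighting f r t₂ w₂ t₃ w₃) :
    IsImprovingReweighting f r t₁ w₁ t₃ w₃ :=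
  ⟨h₂₃.nonneg, h₂₃.sum_eq.trans h₁₂.sum_eq, h₂₃.sum_smul_eq.trans h₁₂.sum_smul_eq,
    h₁₂.sum_smul_le.trans h₂₃.sum_smul_le⟩

end IsImprovingReweighting

end Reweighting

lemma exists_sum_eq_zero_sum_smul_eq_zero_of_finrank_succ_lt_card [Field 𝕜] [AddCommGroup V]
    [Module 𝕜 V] [FiniteDimensional 𝕜 V] (f : α → V) {t : Finset α}
    (ht : finrank 𝕜 V + 1 < #t) :
    ∃ c : α → 𝕜, ∑ x ∈ t, c x = 0 ∧ ∑ x ∈ t, c x • f x = 0 ∧ ∃ x ∈ t, c x ≠ 0 := by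
  have hdep : ¬ LinearIndepOn 𝕜 (fun x => ((1 : 𝕜), f x)) (t : Set α) := fun h => by
    have := h.fintype_card_le_finrank
    simp only [Finset.coe_sort_coe, Fintype.card_coe, finrank_prod, finrank_self] at this
    omega
  obtain ⟨c, hc, x, hx, hcx⟩ := not_linearIndepOn_finset_iff.1 hdep
  refine ⟨c, ?_, ?_, x, hx, hcx⟩
  · simpa [Prod.fst_sum] using congrArg Prod.fst hc
  · simpa [Prod.snd_sum] using congrArg Prod.snd hc

lemma sum_erase_sub_mul_smul [Ring 𝕜] [AddCommGroup V] [Module 𝕜 V] [DecidableEq α]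
    {t : Finset α} {w c : α → 𝕜} {s : 𝕜} {x₀ : α} (hx₀ : w x₀ - s * c x₀ = 0) (g : α → V) :
    ∑ x ∈ t.erase x₀, (w x - s * c x) • g x = ∑ x ∈ t, w x • g x - s • ∑ x ∈ t, c x • g x := by
  rw [sum_erase _ (by rw [hx₀, zero_smul]), smul_sum, ← sum_sub_distrib]
  simp only [sub_smul, mul_smul]

section LinearOrderedField

variable [Field 𝕜] [LinearOrder 𝕜] [IsStrictOrderedRing 𝕜]

/-- The ratio test of the simplex method. -/
lemma exists_nonneg_sub_mul_eq_zero {t : Finset α} {w c : α → 𝕜} (hw : ∀ x ∈ t, 0 ≤ w x)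
    (hc : ∃ x ∈ t, 0 < c x) :
    ∃ s : 𝕜, 0 ≤ s ∧ (∀ x ∈ t, 0 ≤ w x - s * c x) ∧ ∃ x₀ ∈ t, w x₀ - s * c x₀ = 0 := by
  obtain ⟨x₀, hx₀, hmin⟩ := {x ∈ t | 0 < c x}.exists_min_image (fun x => w x / c x)
    (by simpa [Finset.Nonempty] using hc)
  rw [mem_filter] at hx₀
  have hs : 0 ≤ w x₀ / c x₀ := div_nonneg (hw x₀ hx₀.1) hx₀.2.le
  refine ⟨w x₀ / c x₀, hs, fun x hx => ?_, x₀, hx₀.1, ?_⟩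
  · rcases le_or_gt (c x) 0 with hcx | hcx
    · nlinarith [hw x hx]
    · have := hmin x (mem_filter.2 ⟨hx, hcx⟩)
      rw [le_div_iff₀ hcx] at this
      linarith
  · rw [div_mul_cancel₀ _ hx₀.2.ne', sub_self]

variable [AddCommGroup V] [Module 𝕜 V] [FiniteDimensional 𝕜 V] (f : α → V) (r : α → 𝕜)

lemma exists_descent_direction_of_finrank_succ_lt_card {t : Finset α}
    (ht : finrank 𝕜 V + 1 < #t) :
    ∃ c : α → 𝕜, ∑ x ∈ t, c x = 0 ∧ ∑ x ∈ t, c x • f x = 0 ∧ ∑ x ∈ t, c x • r x ≤ 0 ∧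
      ∃ x ∈ t, 0 < c x := by
  obtain ⟨c, hc, hcf, hne⟩ := exists_sum_eq_zero_sum_smul_eq_zero_of_finrank_succ_lt_card f ht
  rcases le_total (∑ x ∈ t, c x • r x) 0 with hcr | hcr
  · exact ⟨c, hc, hcf, hcr, exists_pos_of_sum_zero_of_exists_nonzero c hc hne⟩
  · exact ⟨-c, by simp [hc], by simp [hcf], by simpa using hcr,
      exists_pos_of_sum_zero_of_exists_nonzero (-c) (by simp [hc]) (by simpa using hne)⟩

lemma exists_isImprovingReweighting_erase [DecidableEq α] {t : Finset α} {w : α → 𝕜}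
    (hw : ∀ x ∈ t, 0 ≤ w x) (ht : finrank 𝕜 V + 1 < #t) :
    ∃ x₀ ∈ t, ∃ w', IsImprovingReweighting f r t w (t.erase x₀) w' := by
  obtain ⟨c, hc, hcf, hcr, hpos⟩ := exists_descent_direction_of_finrank_succ_lt_card f r ht
  obtain ⟨s, hs, hnonneg, x₀, hx₀, hzero⟩ := exists_nonneg_sub_mul_eq_zero hw hpos
  refine ⟨x₀, hx₀, fun x => w x - s * c x,
    fun x hx => hnonneg x (mem_of_mem_erase hx), ?_, ?_, ?_⟩
  · simpa [hc] using sum_erase_sub_mul_smul (t := t) hzero (fun _ => (1 : 𝕜))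
  · simp [sum_erase_sub_mul_smul hzero, hcf]
  · rw [sum_erase_sub_mul_smul hzero, le_sub_self_iff]
    exact smul_nonpos_of_nonneg_of_nonpos hs hcr

theorem exists_isImprovingReweighting_card_le_finrank_succ {t : Finset α} {w : α → 𝕜}
    (hw : ∀ x ∈ t, 0 ≤ w x) :
    ∃ t' ⊆ t, ∃ w', #t' ≤ finrank 𝕜 V + 1 ∧ IsImprovingReweighting f r t w t' w' := by
  classical
  induction t using Finset.strongInduction generalizing w with
  | H t ih =>
    by_cases ht : #t ≤ finrank 𝕜 V + 1
    · exact ⟨t, subset_rfl, w, ht, .refl hw⟩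
    obtain ⟨x₀, hx₀, w', hw'⟩ := exists_isImprovingReweighting_erase f r hw (not_le.1 ht)
    obtain ⟨t'', ht'', w'', hcard, hw''⟩ := ih _ (erase_ssubset hx₀) hw'.nonneg
    exact ⟨t'', ht''.trans (erase_subset x₀ t), w'', hcard, hw'.trans hw''⟩

end LinearOrderedField

/-- If some finitely supported feasible policy is optimal, then there exists an
optimal feasible policy supported on at most `m + 1` points. A policy is a pair
`(t, w)` of a finite support `t ⊆ D` and weights `w` that are nonnegative on `t`
and sum to one; feasibility means `∑ x ∈ t, w x • Γx ≤ τ` componentwise. -/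
theorem optimal_policy_small_support {d m : ℕ} (D : Set (Fin d → ℝ))
    (θ : Fin d → ℝ) (Γ : Matrix (Fin m) (Fin d) ℝ) (τ : Fin m → ℝ)
    (policy : Finset (Fin d → ℝ) → ((Fin d → ℝ) → ℝ) → Prop)
    (hpolicy : ∀ t w, policy t w ↔
      (↑t ⊆ D ∧ (∀ x ∈ t, 0 ≤ w x) ∧ ∑ x ∈ t, w x = 1 ∧
        ∀ j, (∑ x ∈ t, w x • Γ.mulVec x) j ≤ τ j))
    (hopt : ∃ t w, policy t w ∧
      ∀ t' w', policy t' w' →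
        ∑ x ∈ t', w' x • (θ ⬝ᵥ x) ≤ ∑ x ∈ t, w x • (θ ⬝ᵥ x)) :
    ∃ t w, policy t w ∧ t.card ≤ m + 1 ∧
      ∀ t' w', policy t' w' →
        ∑ x ∈ t', w' x • (θ ⬝ᵥ x) ≤ ∑ x ∈ t, w x • (θ ⬝ᵥ x) := by
  obtain ⟨t₀, w₀, hpolicy₀, hmax⟩ := hopt
  obtain ⟨hD, hnonneg, hsum, hfeas⟩ := (hpolicy t₀ w₀).1 hpolicy₀
  obtain ⟨t, ht, w, hcard, hw⟩ :=
    exists_isImprovingReweighting_card_le_finrank_succ Γ.mulVec (θ ⬝ᵥ ·) hnonneg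
  rw [finrank_fin_fun] at hcard
  have hfeas' : ∀ j, (∑ x ∈ t, w x • Γ.mulVec x) j ≤ τ j := by
    rw [hw.sum_smul_eq]
    exact hfeas
  refine ⟨t, w, (hpolicy t w).2 ⟨(coe_subset.2 ht).trans hD, hw.nonneg,
    hw.sum_eq.trans hsum, hfeas'⟩, hcard, fun t' w' hpolicy' => ?_⟩
  exact (hmax t' w' hpolicy').trans hw.sum_smul_le
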